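/- arXiv:2109.08765 — 3 statements merged into one kernel-verified Lean document; each statement's English description precedes it below -/
import Mathlib

section
/- The discriminant of the trinomial F(x) = x^n + a x + b is Δ(F) = (-1)^{n(n-1)/2} · (n^n · b^{n-1} + (1-n)^{n-1} · a^n). -/
open Polynomial

/-- The Sylvester matrix of two polynomials `f`, `g` over `ℤ`, where `m` and `n` are
(upper bounds for) the degrees of `f` and `g` respectively: the first `n` rows carry the
coefficients of `f` (in descending order), the last `m` rows carry those of `g`. -/
def sylvesterMatrix (f g : Polynomial ℤ) (m n : ℕ) :
    Matrix (Fin (m + n)) (Fin (m + n)) ℤ :=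
  Matrix.of fun i j =>
    if (i : ℕ) < n then
      (if (i : ℕ) ≤ (j : ℕ) ∧ (j : ℕ) ≤ (i : ℕ) + m then f.coeff (m + i - j) else 0)
    else
      (if (i : ℕ) - n ≤ (j : ℕ) ∧ (j : ℕ) ≤ ((i : ℕ) - n) + n then
        g.coeff (n + ((i : ℕ) - n) - j) else 0)

/-- The resultant `Res(f, g)` of two integer polynomials. -/
noncomputable def resultantZ (f g : Polynomial ℤ) : ℤ :=
  (sylvesterMatrix f g f.natDegree g.natDegree).det

/-- The discriminant of an integer polynomial `f` of degree `n`,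
defined as `(-1)^{n(n-1)/2} · Res(f, f')`. -/
noncomputable def discZ (f : Polynomial ℤ) : ℤ :=
  (-1) ^ (f.natDegree * (f.natDegree - 1) / 2) * resultantZ f (derivative f)

/-!
Mathlib's `Polynomial.resultant` is the determinant of the transposed Sylvester matrix with rows
and columns listed in reverse order, so `resultantZ` is Mathlib's resultant. Put
`f = X ^ n + a X + b`. Since `n f - X f' = (n - 1) a X + n b`, invariance of the resultant under
Euclidean reduction and its behaviour under scaling reduce `Res(f, f')` to `(-1) ^ (n - 1)` times
the resultant of the linear polynomial `(n - 1) a X + n b` against `f' = n X ^ (n - 1) + a`. The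
latter is the value of `f'` at the root `-n b / ((n - 1) a)`, homogenised:
`n (-n b) ^ (n - 1) + a ((n - 1) a) ^ (n - 1)`.
-/

theorem sylvester_eq_sylvesterMatrix_transpose_submatrix_rev (f g : ℤ[X]) (m n : ℕ) :
    sylvester f g m n = (sylvesterMatrix f g m n).transpose.submatrix Fin.rev Fin.rev := by
  ext i j
  have := i.isLt
  induction j using Fin.addCases with
  | left j =>
    simp only [sylvester, sylvesterMatrix, Matrix.of_apply, Matrix.submatrix_apply,
      Matrix.transpose_apply, Fin.addCases_left, Set.mem_Icc, Fin.val_rev, Fin.val_castAdd]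
    have := j.isLt
    split_ifs <;> first | omega | (congr 1; omega)
  | right j =>
    simp only [sylvester, sylvesterMatrix, Matrix.of_apply, Matrix.submatrix_apply,
      Matrix.transpose_apply, Fin.addCases_right, Set.mem_Icc, Fin.val_rev, Fin.val_natAdd]
    have := j.isLt
    split_ifs <;> first | omega | (congr 1; omega)

theorem resultantZ_eq_resultant (f g : ℤ[X]) : resultantZ f g = resultant f g := by
  rw [resultantZ, resultant, sylvester_eq_sylvesterMatrix_transpose_submatrix_rev]
  exact ((Matrix.det_submatrix_equiv_self Fin.revPerm _).trans (Matrix.det_transpose _)).symm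

theorem natDegree_geom_sum₂_C_mul_X_le {R : Type*} [CommRing R] (c y : R) (k : ℕ) :
    (∑ i ∈ Finset.range (k + 1), (C c * X) ^ i * C y ^ (k - i)).natDegree ≤ k := by
  refine natDegree_sum_le_of_forall_le _ _ fun i hi => ?_
  rw [mul_pow, ← C_pow, ← C_pow, mul_right_comm, ← C_mul]
  exact (natDegree_C_mul_X_pow_le _ _).trans (Finset.mem_range_succ_iff.mp hi)

theorem resultant_linear_binomial {R : Type*} [CommRing R] [IsDomain R] (c d e u : R) (k : ℕ) :
    resultant (C c * X + C d) (C e * X ^ k + C u) 1 k = e * (-d) ^ k + u * c ^ k := by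
  rcases k with _ | k
  · rw [pow_zero, mul_one, ← C_add, resultant_C_right]
    simp
  rcases eq_or_ne c 0 with rfl | hc
  · rw [map_zero, zero_mul, zero_add, resultant_C_left, coeff_add, coeff_C_mul_X_pow, if_pos rfl,
      coeff_C_succ, add_zero, zero_pow k.succ_ne_zero]
    ring
  set q := ∑ i ∈ Finset.range (k + 1), (C c * X) ^ i * C (-d) ^ (k - i)
  -- `(c X) ^ (k + 1) - (-d) ^ (k + 1) = (c X + d) q`: so `c ^ (k + 1) g` is constant mod `c X + d`
  have hreduce : C (c ^ (k + 1)) * (C e * X ^ (k + 1) + C u) =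
      C (e * (-d) ^ (k + 1) + u * c ^ (k + 1)) + (C c * X + C d) * (C e * q) := by
    have hgeom := geom_sum₂_mul (C c * X) (C (-d)) (k + 1)
    rw [add_tsub_cancel_right, map_neg, sub_neg_eq_add, ← map_neg] at hgeom
    simp only [map_add, map_mul, map_pow]
    linear_combination (-(C e)) * hgeom
  have hq : (C e * q).natDegree + 1 ≤ k + 1 :=
    Nat.add_le_add_right ((natDegree_C_mul_le _ _).trans (natDegree_geom_sum₂_C_mul_X_le _ _ _)) 1
  apply mul_left_cancel₀ (pow_ne_zero (k + 1) hc)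
  calc c ^ (k + 1) * resultant (C c * X + C d) (C e * X ^ (k + 1) + C u) 1 (k + 1)
      = resultant (C c * X + C d) (C (c ^ (k + 1)) * (C e * X ^ (k + 1) + C u)) 1 (k + 1) := by
        rw [resultant_C_mul_right, pow_one]
    _ = c ^ (k + 1) * (e * (-d) ^ (k + 1) + u * c ^ (k + 1)) := by
        rw [hreduce, resultant_add_mul_right _ _ _ _ _ hq natDegree_linear_le, resultant_C_right]
        simp

theorem natDegree_trinomial {R : Type*} [Semiring R] [Nontrivial R] {n : ℕ} (hn : 2 ≤ n)
    (a b : R) : (X ^ n + C a * X + C b).natDegree = n := by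
  rw [add_assoc, natDegree_add_eq_left_of_natDegree_lt, natDegree_X_pow]
  rw [natDegree_X_pow]
  exact natDegree_linear_le.trans_lt (by omega)

theorem derivative_trinomial {R : Type*} [CommRing R] (n : ℕ) (a b : R) :
    derivative (X ^ (n + 1) + C a * X + C b) = C ((n : R) + 1) * X ^ n + C a := by
  simp

theorem neg_one_pow_mul_self {R : Type*} [Monoid R] [HasDistribNeg R] (k : ℕ) :
    (-1 : R) ^ (k * k) = (-1) ^ k := by
  rcases Nat.even_or_odd k with h | h
  · rw [h.neg_one_pow, (h.mul_right k).neg_one_pow]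
  · rw [h.neg_one_pow, (h.mul h).neg_one_pow]

theorem resultant_trinomial_derivative {R : Type*} [CommRing R] [IsDomain R] {n : ℕ}
    (hn : (n : R) ≠ 0) (a b : R) :
    resultant (X ^ n + C a * X + C b) (derivative (X ^ n + C a * X + C b)) n (n - 1) =
      (n : R) ^ n * b ^ (n - 1) + (1 - (n : R)) ^ (n - 1) * a ^ n := by
  obtain ⟨k, rfl⟩ : ∃ k, n = k + 1 :=
    Nat.exists_eq_succ_of_ne_zero (by rintro rfl; simp at hn)
  rw [Nat.cast_succ] at hn ⊢
  rw [add_tsub_cancel_right, derivative_trinomial]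
  set f := X ^ (k + 1) + C a * X + C b
  set f' := C ((k : R) + 1) * X ^ k + C a
  set ℓ := C ((k : R) * a) * X + C (((k : R) + 1) * b)
  have hreduce : C ((k : R) + 1) * f + f' * (-X) = ℓ := by
    simp only [f, f', ℓ, map_add, map_mul, map_natCast, map_one]
    ring
  have hf' : f'.natDegree ≤ k :=
    natDegree_add_le_of_degree_le (natDegree_C_mul_X_pow_le _ _) (by simp)
  have hlead : f'.coeff k ^ k = ((k : R) + 1) ^ k := by
    rw [coeff_add, coeff_C_mul_X_pow, if_pos rfl, coeff_C]
    split_ifs with hk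
    · rw [hk, pow_zero, pow_zero]
    · rw [add_zero]
  have hsign : (-1 : R) ^ k * (-1) ^ k = 1 := by rw [← mul_pow, neg_one_mul, neg_neg, one_pow]
  apply mul_left_cancel₀ (pow_ne_zero k hn)
  calc ((k : R) + 1) ^ k * resultant f f' (k + 1) k
      = resultant (C ((k : R) + 1) * f + f' * (-X)) f' (k + 1) k := by
        rw [resultant_add_mul_left _ _ _ _ _ (by rw [natDegree_neg, natDegree_X]; omega) hf',
          resultant_C_mul_left]
    _ = (-1) ^ (k * k) * f'.coeff k ^ k * resultant ℓ f' 1 k := by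
        rw [hreduce, add_comm k, resultant_add_left_deg _ _ _ _ _ natDegree_linear_le]
    _ = ((k : R) + 1) ^ k *
          (((k : R) + 1) ^ (k + 1) * b ^ k + (1 - ((k : R) + 1)) ^ k * a ^ (k + 1)) := by
        rw [resultant_linear_binomial, neg_one_pow_mul_self, hlead, neg_pow (((k : R) + 1) * b),
          mul_pow ((k : R) + 1) b, show (1 : R) - (k + 1) = -k by ring, neg_pow (k : R)]
        linear_combination (((k : R) + 1) ^ (k + 1) * ((k : R) + 1) ^ k * b ^ k) * hsign

/-- The discriminant of the trinomial `x^n + a x + b` is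
`(-1)^{n(n-1)/2} · (n^n b^{n-1} + (1-n)^{n-1} a^n)`. -/
theorem discZ_trinomial (n : ℕ) (hn : 2 ≤ n) (a b : ℤ) :
    discZ (X ^ n + C a * X + C b) =
      (-1) ^ (n * (n - 1) / 2) *
        ((n : ℤ) ^ n * b ^ (n - 1) + (1 - (n : ℤ)) ^ (n - 1) * a ^ n) := by
  rw [discZ, resultantZ_eq_resultant, natDegree_derivative, natDegree_trinomial hn,
    resultant_trinomial_derivative (by exact_mod_cast (by omega : n ≠ 0))]
end

section
/- For every integer k ≥ 3, the polynomial x^{2^k} − 1 factors over F_3 as (x−1)(x−2)(x^2−2)(x^2−x−1)(x^2−2x−1) · Π over u ∈ {−1/2, 1/2} and 1 ≤ t ≤ k−3 of (x^{2^{t+1}} − 2u·x^{2^t} − 1), and each displayed factor is irreducible in F_3[x]. In particular, x^{2^k} − 1 has exactly 2 monic linear irreducible factors and exactly 3 monic quadratic irreducible factors over F_3 for every k ≥ 3. -/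
/-!
Over `𝔽₃` we have `(y² - y - 1)(y² + y - 1) = y⁴ - 3y² + 1 = y⁴ + 1`, so splitting
`X^{2^k} - 1 = (X^{2^{k-1}} - 1)(X^{2^{k-1}} + 1)` repeatedly gives the factorization.
Since `X^{2^{t+2}} + 1` is the cyclotomic polynomial `Φ_{2^{t+3}}`, each of its irreducible
factors over `𝔽₃` has degree equal to the order of `3` modulo `2^{t+3}`, namely `2^{t+1}`;
so a factor of exactly that degree is irreducible. Finally a monic irreducible divisor of degree
at most `2` is prime, hence equal to one of the factors, and the factors with `t ≥ 1` have
degree at least `4`.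
-/

open Polynomial Finset

theorem Polynomial.cyclotomic_two_pow (R : Type*) [CommRing R] (n : ℕ) :
    cyclotomic (2 ^ (n + 1)) R = X ^ 2 ^ n + 1 := by
  rw [cyclotomic_prime_pow_eq_geom_sum Nat.prime_two]
  simp [sum_range_succ, add_comm]

/- `-3 = 1 + 4 * (-1)` has order `2 ^ (n + 1)` by `ZMod.orderOf_one_add_four_mul`, and `3` agrees
with `-3` at even exponents. -/
theorem ZMod.orderOf_three (n : ℕ) : orderOf (3 : ZMod (2 ^ (n + 3))) = 2 ^ (n + 1) := by
  have hneg : orderOf (-3 : ZMod (2 ^ (n + 3))) = 2 ^ (n + 1) := by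
    convert! ZMod.orderOf_one_add_four_mul (-1) (by decide) (n + 1) using 2
    push_cast; ring
  have heven (m : ℕ) : (3 : ZMod (2 ^ (n + 3))) ^ 2 ^ (m + 1) = (-3) ^ 2 ^ (m + 1) :=
    ((Nat.even_pow' m.succ_ne_zero).2 even_two).neg_pow _ |>.symm
  apply orderOf_eq_prime_pow
  · cases n with
    | zero => decide
    | succ m =>
      rw [heven]
      exact pow_ne_one_of_lt_orderOf (by positivity)
        (hneg ▸ Nat.pow_lt_pow_right (by norm_num) (by omega))
  · rw [heven, ← hneg, pow_orderOf_eq_one]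

theorem Polynomial.eq_of_monic_of_irreducible_of_dvd {R : Type*} [CommSemiring R] {p q : R[X]}
    (hp : p.Monic) (hq : q.Monic) (hpi : Irreducible p) (hqi : Irreducible q) (h : p ∣ q) :
    p = q :=
  eq_of_monic_of_associated hp hq (hpi.associated_of_dvd hqi h)

theorem irreducible_of_dvd_X_pow_two_pow_add_one {P : (ZMod 3)[X]} (n : ℕ)
    (hP : P ∣ X ^ 2 ^ (n + 2) + 1) (hdeg : P.natDegree = 2 ^ (n + 1)) : Irreducible P := by
  have hcop : Nat.Coprime 3 (2 ^ (n + 3)) := Nat.Coprime.pow_right _ (by norm_num)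
  rw [← cyclotomic_two_pow] at hP
  refine ZMod.irreducible_of_dvd_cyclotomic_of_natDegree
    (Nat.prime_three.coprime_iff_not_dvd.1 hcop) hP ?_
  rw [← orderOf_units, ZMod.coe_unitOfCoprime, Nat.cast_ofNat, ZMod.orderOf_three, hdeg]

noncomputable def twoPowFactor (t : ℕ) (u : ZMod 3) : (ZMod 3)[X] :=
  X ^ (2 ^ (t + 1)) - C (2 * u) * X ^ (2 ^ t) - 1

theorem natDegree_twoPowFactor (t : ℕ) (u : ZMod 3) :
    (twoPowFactor t u).natDegree = 2 ^ (t + 1) := by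
  unfold twoPowFactor
  compute_degree!
  all_goals exact Nat.pow_le_pow_right two_pos t.le_succ

theorem monic_twoPowFactor (t : ℕ) (u : ZMod 3) : (twoPowFactor t u).Monic := by
  have h : 2 ^ t < 2 ^ (t + 1) := Nat.pow_lt_pow_succ one_lt_two
  unfold twoPowFactor
  monicity!
  simp [h.le, h.not_ge]

theorem prod_twoPowFactor (t : ℕ) :
    ∏ u ∈ ({1, 2} : Finset (ZMod 3)), twoPowFactor t u = X ^ 2 ^ (t + 2) + 1 := by
  rw [prod_pair (by decide), twoPowFactor, twoPowFactor]
  have h4 : (2 * 2 : ZMod 3) = 1 := by decide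
  simp only [mul_one, h4, map_ofNat, map_one]
  ring_nf
  reduce_mod_char

theorem irreducible_twoPowFactor (t : ℕ) {u : ZMod 3} (hu : u ∈ ({1, 2} : Finset (ZMod 3))) :
    Irreducible (twoPowFactor t u) :=
  irreducible_of_dvd_X_pow_two_pow_add_one t (prod_twoPowFactor t ▸ dvd_prod_of_mem _ hu)
    (natDegree_twoPowFactor t u)

theorem X_pow_two_pow_sub_one_eq {k : ℕ} (hk : 3 ≤ k) :
    (X ^ 2 ^ k - 1 : (ZMod 3)[X]) =
      (X - 1) * (X - 2) * (X ^ 2 - 2) * (X ^ 2 - X - 1) * (X ^ 2 - 2 * X - 1) *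
        ∏ t ∈ Icc 1 (k - 3), ∏ u ∈ ({1, 2} : Finset (ZMod 3)), twoPowFactor t u := by
  induction k, hk using Nat.le_induction with
  | base =>
    simp only [Nat.sub_self, Icc_eq_empty_of_lt zero_lt_one, prod_empty, mul_one]
    ring_nf
    reduce_mod_char
  | succ k hk ih =>
    have hsplit : (X ^ 2 ^ (k + 1) - 1 : (ZMod 3)[X]) = (X ^ 2 ^ k - 1) * (X ^ 2 ^ k + 1) := by
      ring
    rw [hsplit, ih, show k + 1 - 3 = k - 3 + 1 by omega, prod_Icc_succ_top (by omega),
      prod_twoPowFactor, show k - 3 + 1 + 2 = k by omega]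
    ring

theorem natDegree_X_sub_one : (X - 1 : (ZMod 3)[X]).natDegree = 1 := by
  compute_degree!

theorem natDegree_X_sub_two : (X - 2 : (ZMod 3)[X]).natDegree = 1 := by
  compute_degree!

theorem irreducible_X_sub_one : Irreducible (X - 1 : (ZMod 3)[X]) :=
  irreducible_of_degree_eq_one (by compute_degree!)

theorem irreducible_X_sub_two : Irreducible (X - 2 : (ZMod 3)[X]) :=
  irreducible_of_degree_eq_one (by compute_degree!)

theorem natDegree_X_sq_sub_two : (X ^ 2 - 2 : (ZMod 3)[X]).natDegree = 2 := by
  compute_degree!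

theorem natDegree_X_sq_sub_X_sub_one : (X ^ 2 - X - 1 : (ZMod 3)[X]).natDegree = 2 := by
  compute_degree!

theorem natDegree_X_sq_sub_two_mul_X_sub_one :
    (X ^ 2 - 2 * X - 1 : (ZMod 3)[X]).natDegree = 2 := by
  compute_degree!

theorem irreducible_X_sq_sub_two : Irreducible (X ^ 2 - 2 : (ZMod 3)[X]) :=
  irreducible_of_degree_le_three_of_not_isRoot (by rw [natDegree_X_sq_sub_two]; decide)
    (by simp [IsRoot]; decide)

theorem irreducible_X_sq_sub_X_sub_one : Irreducible (X ^ 2 - X - 1 : (ZMod 3)[X]) :=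
  irreducible_of_degree_le_three_of_not_isRoot (by rw [natDegree_X_sq_sub_X_sub_one]; decide)
    (by simp [IsRoot]; decide)

theorem irreducible_X_sq_sub_two_mul_X_sub_one :
    Irreducible (X ^ 2 - 2 * X - 1 : (ZMod 3)[X]) :=
  irreducible_of_degree_le_three_of_not_isRoot
    (by rw [natDegree_X_sq_sub_two_mul_X_sub_one]; decide) (by simp [IsRoot]; decide)

theorem monic_irreducible_dvd_X_pow_two_pow_sub_one_iff {k : ℕ} (hk : 3 ≤ k) {g : (ZMod 3)[X]}
    (hg : g.natDegree ≤ 2) :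
    g.Monic ∧ Irreducible g ∧ g ∣ X ^ 2 ^ k - 1 ↔
      g = X - 1 ∨ g = X - 2 ∨ g = X ^ 2 - 2 ∨ g = X ^ 2 - X - 1 ∨ g = X ^ 2 - 2 * X - 1 := by
  rw [X_pow_two_pow_sub_one_eq hk]
  constructor
  · rintro ⟨hm, hirr, hdvd⟩
    have heq {q : (ZMod 3)[X]} (hq : q.Monic) (hqi : Irreducible q) (h : g ∣ q) : g = q :=
      eq_of_monic_of_irreducible_of_dvd hm hq hirr hqi h
    simp only [hirr.prime.dvd_mul, hirr.prime.dvd_finsetProd_iff] at hdvd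
    rcases hdvd with ((((h | h) | h) | h) | h) | ⟨t, ht, u, hu, h⟩
    · exact .inl (heq (by monicity!) irreducible_X_sub_one h)
    · exact .inr <| .inl (heq (by monicity!) irreducible_X_sub_two h)
    · exact .inr <| .inr <| .inl (heq (by monicity!) irreducible_X_sq_sub_two h)
    · exact .inr <| .inr <| .inr <| .inl (heq (by monicity!) irreducible_X_sq_sub_X_sub_one h)
    · exact .inr <| .inr <| .inr <| .inr
        (heq (by monicity!) irreducible_X_sq_sub_two_mul_X_sub_one h)
    · have hdeg := natDegree_twoPowFactor t u ▸
        congrArg natDegree (heq (monic_twoPowFactor t u) (irreducible_twoPowFactor t hu) h)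
      have : 2 ^ 2 ≤ 2 ^ (t + 1) := Nat.pow_le_pow_right two_pos (by simp at ht; omega)
      omega
  · rintro (rfl | rfl | rfl | rfl | rfl) <;>
      refine ⟨by monicity!, ?_, by
        simp (maxDischargeDepth := 5) only [mul_assoc, dvd_mul_right, Dvd.dvd.mul_left]⟩
    exacts [irreducible_X_sub_one, irreducible_X_sub_two, irreducible_X_sq_sub_two,
      irreducible_X_sq_sub_X_sub_one, irreducible_X_sq_sub_two_mul_X_sub_one]

theorem card_monic_irreducible_linear_dvd_X_pow_two_pow_sub_one {k : ℕ} (hk : 3 ≤ k) :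
    Nat.card {g : (ZMod 3)[X] // g.Monic ∧ Irreducible g ∧ g.natDegree = 1 ∧
      g ∣ X ^ 2 ^ k - 1} = 2 := by
  have hset : {g : (ZMod 3)[X] | g.Monic ∧ Irreducible g ∧ g.natDegree = 1 ∧
      g ∣ X ^ 2 ^ k - 1} = {X - 1, X - 2} := by
    ext g
    simp only [Set.mem_ofPred_eq, Set.mem_insert_iff, Set.mem_singleton_iff]
    constructor
    · rintro ⟨hm, hi, hd, hdvd⟩
      rcases (monic_irreducible_dvd_X_pow_two_pow_sub_one_iff hk (by omega)).1
        ⟨hm, hi, hdvd⟩ with h | h | rfl | rfl | rfl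
      exacts [.inl h, .inr h, absurd hd (by rw [natDegree_X_sq_sub_two]; decide),
        absurd hd (by rw [natDegree_X_sq_sub_X_sub_one]; decide),
        absurd hd (by rw [natDegree_X_sq_sub_two_mul_X_sub_one]; decide)]
    · intro h
      have hd : g.natDegree = 1 := by
        rcases h with rfl | rfl
        exacts [natDegree_X_sub_one, natDegree_X_sub_two]
      obtain ⟨hm, hi, hdvd⟩ :=
        (monic_irreducible_dvd_X_pow_two_pow_sub_one_iff hk (g := g) (by omega)).2 (by tauto)
      exact ⟨hm, hi, hd, hdvd⟩
  have hcard := Set.ncard_pair (a := (X - 1 : (ZMod 3)[X])) (b := X - 2)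
    (fun h => absurd (congrArg (eval 0) h) (by simp; decide))
  rw [← hset] at hcard
  exact (Nat.card_coe_set_eq _).trans hcard

theorem card_monic_irreducible_quadratic_dvd_X_pow_two_pow_sub_one {k : ℕ} (hk : 3 ≤ k) :
    Nat.card {g : (ZMod 3)[X] // g.Monic ∧ Irreducible g ∧ g.natDegree = 2 ∧
      g ∣ X ^ 2 ^ k - 1} = 3 := by
  have hset : {g : (ZMod 3)[X] | g.Monic ∧ Irreducible g ∧ g.natDegree = 2 ∧
      g ∣ X ^ 2 ^ k - 1} = {X ^ 2 - 2, X ^ 2 - X - 1, X ^ 2 - 2 * X - 1} := by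
    ext g
    simp only [Set.mem_ofPred_eq, Set.mem_insert_iff, Set.mem_singleton_iff]
    constructor
    · rintro ⟨hm, hi, hd, hdvd⟩
      rcases (monic_irreducible_dvd_X_pow_two_pow_sub_one_iff hk hd.le).1 ⟨hm, hi, hdvd⟩ with
        rfl | rfl | h | h | h
      exacts [absurd hd (by rw [natDegree_X_sub_one]; decide),
        absurd hd (by rw [natDegree_X_sub_two]; decide), .inl h, .inr (.inl h),
        .inr (.inr h)]
    · intro h
      have hd : g.natDegree = 2 := by
        rcases h with rfl | rfl | rfl
        exacts [natDegree_X_sq_sub_two, natDegree_X_sq_sub_X_sub_one,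
          natDegree_X_sq_sub_two_mul_X_sub_one]
      obtain ⟨hm, hi, hdvd⟩ :=
        (monic_irreducible_dvd_X_pow_two_pow_sub_one_iff hk hd.le).2 (by tauto)
      exact ⟨hm, hi, hd, hdvd⟩
  have hcard := Set.ncard_eq_three.2 ⟨(X ^ 2 - 2 : (ZMod 3)[X]), X ^ 2 - X - 1, X ^ 2 - 2 * X - 1,
    fun h => absurd (congrArg (eval 0) h) (by simp; decide),
    fun h => absurd (congrArg (eval 0) h) (by simp; decide),
    fun h => absurd (congrArg (eval 1) h) (by simp; decide), rfl⟩
  rw [← hset] at hcard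
  exact (Nat.card_coe_set_eq _).trans hcard

/-- For `k ≥ 3`, the factorization of `x^{2^k} - 1` over `F_3` into monic irreducible
factors (identifying `1/2 = 2` and `-1/2 = 1` in `F_3`), each displayed factor being
irreducible; in particular `x^{2^k} - 1` has exactly `2` monic linear and exactly `3`
monic quadratic irreducible factors over `F_3`. -/
theorem pow_two_pow_sub_one_factorization_mod_three (k : ℕ) (hk : 3 ≤ k) :
    ((X ^ (2 ^ k) - 1 : Polynomial (ZMod 3)) =
        (X - 1) * (X - 2) * (X ^ 2 - 2) * (X ^ 2 - X - 1) * (X ^ 2 - 2 * X - 1) *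
          ∏ t ∈ Finset.Icc 1 (k - 3), ∏ u ∈ ({1, 2} : Finset (ZMod 3)),
            (X ^ (2 ^ (t + 1)) - C (2 * u) * X ^ (2 ^ t) - 1)) ∧
      Irreducible (X - 1 : Polynomial (ZMod 3)) ∧
      Irreducible (X - 2 : Polynomial (ZMod 3)) ∧
      Irreducible (X ^ 2 - 2 : Polynomial (ZMod 3)) ∧
      Irreducible (X ^ 2 - X - 1 : Polynomial (ZMod 3)) ∧
      Irreducible (X ^ 2 - 2 * X - 1 : Polynomial (ZMod 3)) ∧
      (∀ t ∈ Finset.Icc 1 (k - 3), ∀ u ∈ ({1, 2} : Finset (ZMod 3)),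
        Irreducible (X ^ (2 ^ (t + 1)) - C (2 * u) * X ^ (2 ^ t) - 1 :
          Polynomial (ZMod 3))) ∧
      Nat.card {g : Polynomial (ZMod 3) // g.Monic ∧ Irreducible g ∧ g.natDegree = 1 ∧
        g ∣ (X ^ (2 ^ k) - 1)} = 2 ∧
      Nat.card {g : Polynomial (ZMod 3) // g.Monic ∧ Irreducible g ∧ g.natDegree = 2 ∧
        g ∣ (X ^ (2 ^ k) - 1)} = 3 :=
  ⟨X_pow_two_pow_sub_one_eq hk, irreducible_X_sub_one, irreducible_X_sub_two,
    irreducible_X_sq_sub_two, irreducible_X_sq_sub_X_sub_one,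
    irreducible_X_sq_sub_two_mul_X_sub_one, fun t _ _ hu => irreducible_twoPowFactor t hu,
    card_monic_irreducible_linear_dvd_X_pow_two_pow_sub_one hk,
    card_monic_irreducible_quadratic_dvd_X_pow_two_pow_sub_one hk⟩
end

section
/- Let p be a prime, v ≥ u ≥ 2 integers with gcd(u, p) = 1, and a, b integers with p ∤ ab. Then the trinomial F(x) = x^{p^r} + p^v·a·x + p^u·b is irreducible over ℚ. -/
/-!
Put `n = p ^ r` and `c = p ^ (-u / n)`. For the `p`-adic absolute value, the Gauss norm of the
trinomial at radius `c` is `c ^ n`, attained at the leading and at the constant coefficient: its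
Newton polygon is the single segment of slope `-u / n`. The Gauss norm is multiplicative and a
monic polynomial of degree `m` has Gauss norm at least `c ^ m`, so for a monic factorization
`F = G * H` both bounds are equalities, which forces `|G(0)|_p = c ^ m`, i.e.
`n * v_p(G(0)) = u * m`. As `u` is prime to `n`, `n ∣ m`, so the factorization is trivial.
-/

open Polynomial

namespace Polynomial

section Trinomial

variable {R : Type*} [Semiring R] {n : ℕ}

theorem monic_X_pow_add_C_mul_X_add_C (hn : 1 < n) (a b : R) : (X ^ n + C a * X + C b).Monic := by
  rw [add_assoc]
  exact monic_X_pow_add (degree_linear_le.trans_lt (by exact_mod_cast hn))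

theorem natDegree_X_pow_add_C_mul_X_add_C [Nontrivial R] (hn : 1 < n) (a b : R) :
    (X ^ n + C a * X + C b).natDegree = n := by
  rw [add_assoc, natDegree_add_eq_left_of_degree_lt, natDegree_X_pow]
  rw [degree_X_pow]
  exact degree_linear_le.trans_lt (by exact_mod_cast hn)

theorem coeff_zero_X_pow_add_C_mul_X_add_C (hn : n ≠ 0) (a b : R) :
    (X ^ n + C a * X + C b).coeff 0 = b := by
  simp [coeff_X_pow, hn.symm]

theorem gaussNorm_X_pow_add_C_mul_X_add_C_le [Nontrivial R] {v : AbsoluteValue R ℝ}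
    (hna : IsNonarchimedean v) {c : ℝ} (hc : 0 ≤ c) (a b : R) :
    (X ^ n + C a * X + C b).gaussNorm v c ≤ max (max (c ^ n) (v a * c)) (v b) := by
  have hnorm := isNonarchimedean_gaussNorm v hna hc
  calc (X ^ n + C a * X + C b).gaussNorm v c
      ≤ max ((X ^ n + C a * X).gaussNorm v c) ((C b).gaussNorm v c) := hnorm _ _
    _ ≤ max (max ((X ^ n).gaussNorm v c) ((C a * X).gaussNorm v c)) ((C b).gaussNorm v c) :=
        max_le_max_right _ (hnorm _ _)
    _ = max (max (c ^ n) (v a * c)) (v b) := by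
        rw [X_pow_eq_monomial, C_mul_X_eq_monomial, gaussNorm_monomial, gaussNorm_monomial,
          gaussNorm_C, map_one, one_mul, pow_one]

end Trinomial

section GaussNorm

variable {c : ℝ}

theorem Monic.pow_natDegree_le_gaussNorm {R : Type*} [Semiring R] [Nontrivial R]
    {v : AbsoluteValue R ℝ} {G : R[X]} (hG : G.Monic) (hc : 0 ≤ c) :
    c ^ G.natDegree ≤ G.gaussNorm v c := by
  simpa [hG.coeff_natDegree] using G.le_gaussNorm v hc G.natDegree

theorem Monic.gaussNorm_le_of_mul {R : Type*} [Ring R] [Nontrivial R] {v : AbsoluteValue R ℝ}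
    (hna : IsNonarchimedean v) (hc : 0 < c) {G H : R[X]}
    (hG : G.Monic) (hH : H.Monic) (hGH : (G * H).gaussNorm v c ≤ c ^ (G * H).natDegree) :
    G.gaussNorm v c ≤ c ^ G.natDegree := by
  rw [gaussNorm_mul hna hc, hG.natDegree_mul hH, pow_add] at hGH
  refine le_of_mul_le_mul_right ?_ (pow_pos hc H.natDegree)
  calc G.gaussNorm v c * c ^ H.natDegree
      ≤ G.gaussNorm v c * H.gaussNorm v c :=
        mul_le_mul_of_nonneg_left (hH.pow_natDegree_le_gaussNorm hc.le) (gaussNorm_nonneg v G hc.le)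
    _ ≤ c ^ G.natDegree * c ^ H.natDegree := hGH

theorem Monic.abv_coeff_zero_eq_of_mul {R : Type*} [CommRing R] [Nontrivial R]
    {v : AbsoluteValue R ℝ} (hna : IsNonarchimedean v) (hc : 0 < c) {G H : R[X]}
    (hG : G.Monic) (hH : H.Monic) (hGH : (G * H).gaussNorm v c ≤ c ^ (G * H).natDegree)
    (h0 : v ((G * H).coeff 0) = c ^ (G * H).natDegree) :
    v (G.coeff 0) = c ^ G.natDegree := by
  have hG0 : v (G.coeff 0) ≤ c ^ G.natDegree := by
    simpa using (G.le_gaussNorm v hc.le 0).trans (hG.gaussNorm_le_of_mul hna hc hH hGH)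
  have hH0 : v (H.coeff 0) ≤ c ^ H.natDegree := by
    rw [mul_comm] at hGH
    simpa using (H.le_gaussNorm v hc.le 0).trans (hH.gaussNorm_le_of_mul hna hc hG hGH)
  rw [mul_coeff_zero, map_mul, hG.natDegree_mul hH, pow_add] at h0
  refine le_antisymm hG0 (le_of_mul_le_mul_right ?_ (pow_pos hc H.natDegree))
  rw [← h0]
  exact mul_le_mul_of_nonneg_left hH0 (v.nonneg _)

end GaussNorm

end Polynomial

namespace Rat.AbsoluteValue

variable {p : ℕ} [Fact p.Prime]

theorem isNonarchimedean_padic : IsNonarchimedean (padic p) := fun x y => by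
  simpa using (Rat.cast_le (K := ℝ)).2 (padicNorm.nonarchimedean (p := p) (q := x) (r := y))

theorem padic_eq_zpow_of_ne_zero {x : ℚ} (hx : x ≠ 0) :
    padic p x = (p : ℝ) ^ (-padicValRat p x) := by
  simp [padicNorm.eq_zpow_of_nonzero hx]

theorem padic_prime_pow_mul (k : ℕ) {a : ℤ} (ha : ¬ (p : ℤ) ∣ a) :
    padic p ((p : ℚ) ^ k * a) = (p : ℝ) ^ (-(k : ℤ)) := by
  simp [padicNorm.padicNorm_p_of_prime, (padicNorm.int_eq_one_iff a).2 ha]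

theorem padic_prime_pow_mul_le (k : ℕ) (a : ℤ) :
    padic p ((p : ℚ) ^ k * a) ≤ (p : ℝ) ^ (-(k : ℤ)) := by
  rw [map_mul, map_pow, padic_eq_padicNorm p p, padicNorm.padicNorm_p_of_prime]
  simpa using mul_le_of_le_one_right (by positivity) (padic_le_one p a)

theorem natCast_dvd_mul_of_padic_eq_pow {x : ℚ} {c : ℝ} (hc : 0 < c) {t : ℤ} {m n : ℕ}
    (hct : c ^ n = (p : ℝ) ^ (-t)) (hx : padic p x = c ^ m) : (n : ℤ) ∣ t * m := by
  have hx0 : x ≠ 0 := by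
    rintro rfl
    exact (pow_pos hc m).ne' (by simpa using hx.symm)
  have hp : (1 : ℝ) < p := by exact_mod_cast (Fact.out : p.Prime).one_lt
  have key : (p : ℝ) ^ (-(padicValRat p x * n)) = (p : ℝ) ^ (-(t * m)) := by
    calc (p : ℝ) ^ (-(padicValRat p x * n)) = (padic p x) ^ n := by
          rw [padic_eq_zpow_of_ne_zero hx0, ← zpow_natCast, ← zpow_mul, neg_mul]
      _ = (c ^ n) ^ m := by rw [hx, ← pow_mul, ← pow_mul, mul_comm]
      _ = (p : ℝ) ^ (-(t * m)) := by rw [hct, ← zpow_natCast, ← zpow_mul, neg_mul]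
  have := neg_injective (zpow_right_injective₀ (by positivity) hp.ne' key)
  exact ⟨padicValRat p x, by rw [← this, mul_comm]⟩

end Rat.AbsoluteValue

open Rat.AbsoluteValue in
theorem Polynomial.Monic.irreducible_of_gaussNorm_padic {p : ℕ} [Fact p.Prime] {F : ℚ[X]}
    (hF : F.Monic) {c : ℝ} (hc : 0 < c) {t : ℤ} (hcop : IsCoprime t F.natDegree)
    (hct : c ^ F.natDegree = (p : ℝ) ^ (-t)) (h0 : padic p (F.coeff 0) = c ^ F.natDegree)
    (hnorm : F.gaussNorm (padic p) c ≤ c ^ F.natDegree) : Irreducible F := by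
  refine hF.irreducible_iff_natDegree.2 ⟨?_, fun G H hG hH hGH => ?_⟩
  · rintro rfl
    have hp : (1 : ℝ) < p := by exact_mod_cast (Fact.out : p.Prime).one_lt
    have ht : -t = 0 := zpow_right_injective₀ (by positivity) hp.ne'
      (hct.symm.trans (by simp) : _ = (p : ℝ) ^ (0 : ℤ))
    exact not_isCoprime_zero_zero (by simpa [neg_eq_zero.1 ht] using hcop)
  subst hGH
  have hdvd : ((G * H).natDegree : ℤ) ∣ t * G.natDegree :=
    natCast_dvd_mul_of_padic_eq_pow hc hct
      (hG.abv_coeff_zero_eq_of_mul isNonarchimedean_padic hc hH hnorm h0)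
  have hdvd' : (G * H).natDegree ∣ G.natDegree := by
    exact_mod_cast hcop.symm.dvd_of_dvd_mul_left hdvd
  rw [hG.natDegree_mul hH] at hdvd'
  rcases Nat.eq_zero_or_pos G.natDegree with h | h
  · exact Or.inl h
  · have := Nat.le_of_dvd h hdvd'
    right; omega

open Rat.AbsoluteValue in
theorem irreducible_X_pow_add_C_mul_X_add_C_of_padic {p : ℕ} [Fact p.Prime] {n u v : ℕ}
    (hn : 1 < n) (hun : u.Coprime n) (huv : u ≤ v) (a : ℤ) {b : ℤ} (hb : ¬ (p : ℤ) ∣ b) :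
    Irreducible (X ^ n + C ((p : ℚ) ^ v * a) * X + C ((p : ℚ) ^ u * b)) := by
  have hp1 : (1 : ℝ) ≤ p := by exact_mod_cast (Fact.out : p.Prime).one_lt.le
  set c : ℝ := ((p : ℝ) ^ (-(u : ℤ))) ^ ((n : ℝ)⁻¹)
  have hc : 0 < c := by positivity
  have hcn : c ^ n = (p : ℝ) ^ (-(u : ℤ)) :=
    Real.rpow_inv_natCast_pow (by positivity) (by omega)
  have hc1 : c ≤ 1 :=
    Real.rpow_le_one (by positivity) (zpow_le_one_of_nonpos₀ hp1 (by omega)) (by positivity)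
  have hdeg := natDegree_X_pow_add_C_mul_X_add_C hn ((p : ℚ) ^ v * a) ((p : ℚ) ^ u * b)
  refine (monic_X_pow_add_C_mul_X_add_C hn _ _).irreducible_of_gaussNorm_padic (p := p) hc
    (t := u) ?_ ?_ ?_ ?_ <;> rw [hdeg]
  · exact Nat.isCoprime_iff_coprime.2 hun
  · exact hcn
  · rw [coeff_zero_X_pow_add_C_mul_X_add_C (by omega), padic_prime_pow_mul u hb, hcn]
  · refine (gaussNorm_X_pow_add_C_mul_X_add_C_le isNonarchimedean_padic hc.le _ _).trans
      (max_le (max_le le_rfl ?_) ((padic_prime_pow_mul_le u b).trans_eq hcn.symm))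
    calc padic p ((p : ℚ) ^ v * a) * c ≤ (p : ℝ) ^ (-(v : ℤ)) * 1 :=
          mul_le_mul (padic_prime_pow_mul_le v a) hc1 hc.le (by positivity)
      _ ≤ c ^ n := by rw [mul_one, hcn]; exact zpow_le_zpow_right₀ hp1 (by omega)

theorem trinomial_irreducible_general (p : ℕ) (hp : p.Prime) (r u v : ℕ) (hr : 0 < r)
    (huv : u ≤ v) (hgcd : Nat.gcd u p = 1)
    (a b : ℤ) (hab : ¬ (p : ℤ) ∣ a * b) :
    Irreducible ((X ^ (p ^ r) + C ((p : ℤ) ^ v * a) * X + C ((p : ℤ) ^ u * b)).map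
      (Int.castRingHom ℚ)) := by
  have : Fact p.Prime := ⟨hp⟩
  rw [Polynomial.map_add, Polynomial.map_add, Polynomial.map_mul, Polynomial.map_pow, map_X,
    Polynomial.map_C, Polynomial.map_C, eq_intCast, eq_intCast]
  push_cast
  exact irreducible_X_pow_add_C_mul_X_add_C_of_padic (Nat.one_lt_pow hr.ne' hp.one_lt)
    (Nat.Coprime.pow_right r hgcd) huv a fun h => hab (h.mul_left a)

/-- For a prime `p`, integers `v ≥ u ≥ 2` with `gcd(u, p) = 1`, `r ≥ 1`, and integers
`a, b` with `p ∤ ab`, the trinomial `x^{p^r} + p^v a x + p^u b` is irreducible over `ℚ`. -/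
theorem trinomial_irreducible (p : ℕ) (hp : p.Prime) (r u v : ℕ) (hr : 0 < r)
    (hu : 2 ≤ u) (huv : u ≤ v) (hgcd : Nat.gcd u p = 1)
    (a b : ℤ) (hab : ¬ (p : ℤ) ∣ a * b) :
    Irreducible ((X ^ (p ^ r) + C ((p : ℤ) ^ v * a) * X + C ((p : ℤ) ^ u * b)).map
      (Int.castRingHom ℚ)) :=
  trinomial_irreducible_general p hp r u v hr huv hgcd a b hab
end
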